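/- Let G be a finite connected simple graph with distinguished vertices v_in ≠ v_out such that G − v_out is connected, and let S ⊆ ℝ^V be the real linear span of { tr_{ω₁} − tr_{ω₂} : ω₁, ω₂ proper walks from v_in to v_out }. If there exists a walk of length ℓ from v_in to a vertex v entirely inside G − v_out, then the vector χ_{v_in} − (−1)^ℓ χ_v belongs to S. -/

import Mathlib

/-! For an edge `vw` of `G - vout`, pick a walk `p` from `vin` to `v` avoiding `vout` and a walk
`q` from `v` that meets `vout` only at its end. The proper walks `p ++ q` and
`p ++ (v → w → v) ++ q` differ in trace by exactly `χ_v + χ_w`. Along a walk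
`vin = x₀, x₁, …, x_ℓ = v` in `G - vout`, the alternating sum of the vectors `χ_{xᵢ} + χ_{xᵢ₊₁}`
telescopes to `χ_{vin} - (-1)^ℓ χ_v`. -/

open scoped Classical

noncomputable section

/-- The trace of a walk: the number of occurrences of each vertex along the walk,
viewed as a vector in `ℝ^V`. -/
def trace {V : Type*} [DecidableEq V] {G : SimpleGraph V} {u v : V} (ω : G.Walk u v) : V → ℝ :=
  fun x => (ω.support.count x : ℝ)

/-- A walk from `vin` to `vout` is proper if it visits `vout` exactly once
(namely as its final vertex). -/
def IsProper {V : Type*} [DecidableEq V] {G : SimpleGraph V} {vin vout : V}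
    (ω : G.Walk vin vout) : Prop :=
  ω.support.count vout = 1

/-- The set of traces of proper walks from `vin` to `vout`, as vectors in `ℝ^V`. -/
def traceSet {V : Type*} [DecidableEq V] (G : SimpleGraph V) (vin vout : V) : Set (V → ℝ) :=
  {f | ∃ ω : G.Walk vin vout, IsProper ω ∧ f = trace ω}

/-- `Ψ(G)`: the relative interior (interior with respect to the affine span) of the convex
hull of the traces of proper walks from `vin` to `vout`. -/
def Psi {V : Type*} [Fintype V] [DecidableEq V] (G : SimpleGraph V) (vin vout : V) :
    Set (V → ℝ) :=
  intrinsicInterior ℝ (convexHull ℝ (traceSet G vin vout))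

/-- The matrix `M_β` associated to a graph `G` with distinguished vertices `vin, vout`
and vertex weights `β`. -/
def Mmat {V : Type*} [Fintype V] [DecidableEq V] (G : SimpleGraph V) (vin vout : V)
    (β : V → ℝ) : Matrix V V ℝ :=
  fun v w =>
    if (v = vout ∧ w = vout) ∨ (v = vin ∧ w = vout) then 1
    else if G.Adj v w ∧ v ≠ vout ∧ w ≠ vout then
      β v / ∑ u ∈ Finset.univ.filter (fun u => G.Adj u w), β u
    else 0

/-- The equation `τ_ρ = r` is solvable on `G`: there is a positive vertex-weight function `β`
with `M_β r = r` and `r(vout) = 1`. -/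
def Solvable {V : Type*} [Fintype V] [DecidableEq V] (G : SimpleGraph V) (vin vout : V)
    (r : V → ℝ) : Prop :=
  ∃ β : V → ℝ, (∀ v, 0 < β v) ∧ (Mmat G vin vout β).mulVec r = r ∧ r vout = 1

namespace SimpleGraph

variable {V : Type*} {G : SimpleGraph V}

theorem Preconnected.exists_walk_support_subset {s : Set V} (h : (G.induce s).Preconnected)
    {a b : V} (ha : a ∈ s) (hb : b ∈ s) : ∃ p : G.Walk a b, ∀ x ∈ p.support, x ∈ s := by
  obtain ⟨q⟩ := h ⟨a, ha⟩ ⟨b, hb⟩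
  let f := (Embedding.induce (G := G) s).toHom
  refine ⟨q.map f, fun x hx => ?_⟩
  replace hx : x ∈ (q.map f).support := hx
  rw [Walk.support_map, List.mem_map] at hx
  obtain ⟨y, -, rfl⟩ := hx
  exact y.2

theorem Walk.single_sub_neg_one_pow_smul_single_mem {R : Type*} [CommRing R] [DecidableEq V]
    {S : Submodule R (V → R)} {a b : V} (p : G.Walk a b)
    (hS : ∀ d ∈ p.darts, Pi.single d.fst 1 + Pi.single d.snd 1 ∈ S) :
    Pi.single a 1 - (-1 : R) ^ p.length • Pi.single b 1 ∈ S := by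
  induction p with
  | nil => simp
  | @cons a c b h p ih =>
    have hedge : Pi.single a 1 + Pi.single c 1 ∈ S := hS _ (List.mem_cons_self ..)
    have htail := ih fun d hd => hS d (List.mem_cons_of_mem _ hd)
    have hsplit : Pi.single a 1 - (-1 : R) ^ (p.cons h).length • Pi.single b 1
        = (Pi.single a 1 + Pi.single c 1)
          - (Pi.single c 1 - (-1 : R) ^ p.length • Pi.single b 1) := by
      rw [Walk.length_cons, pow_succ]
      module
    rw [hsplit]
    exact S.sub_mem hedge htail

end SimpleGraph

open SimpleGraph

section Traces

variable {V : Type*} [DecidableEq V] {G : SimpleGraph V}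

theorem trace_cons {u v w : V} (h : G.Adj u v) (p : G.Walk v w) :
    trace (p.cons h) = Pi.single u 1 + trace p := by
  funext x
  simp only [trace, Walk.support_cons, List.count_cons, Pi.add_apply, Pi.single_apply, beq_iff_eq]
  push_cast
  simp only [eq_comm (a := u)]
  ring

theorem trace_append {u v w : V} (p : G.Walk u v) (q : G.Walk v w) :
    trace (p.append q) = trace p + trace q - Pi.single v 1 := by
  funext x
  have hq : q.support.count x = q.support.tail.count x + if v = x then 1 else 0 := by
    conv_lhs => rw [← q.cons_tail_support]
    simp only [List.count_cons, beq_iff_eq]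
  simp only [trace, Walk.support_append, List.count_append, hq, Pi.add_apply, Pi.sub_apply,
    Pi.single_apply]
  push_cast
  simp only [eq_comm (a := v)]
  ring

theorem isProper_iff_trace_eq_one {u w : V} (ω : G.Walk u w) : IsProper ω ↔ trace ω w = 1 :=
  Nat.cast_eq_one.symm

theorem IsProper.cons {u v w : V} {h : G.Adj u v} {q : G.Walk v w} (hu : u ≠ w)
    (hq : IsProper q) : IsProper (q.cons h) := by
  rw [isProper_iff_trace_eq_one, trace_cons] at *
  simp [hq, hu.symm]

theorem IsProper.append {u v w : V} {p : G.Walk u v} {q : G.Walk v w} (hp : w ∉ p.support)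
    (hq : IsProper q) : IsProper (p.append q) := by
  have hvw : v ≠ w := fun h => hp (h ▸ p.end_mem_support)
  have hpw : trace p w = 0 := by simp [trace, List.count_eq_zero_of_not_mem hp]
  rw [isProper_iff_trace_eq_one, trace_append] at *
  simp [hpw, hq, hvw.symm]

variable (G) in
def traceDiffSpan (vin vout : V) : Submodule ℝ (V → ℝ) :=
  Submodule.span ℝ {d : V → ℝ | ∃ ω₁ ω₂ : G.Walk vin vout,
    IsProper ω₁ ∧ IsProper ω₂ ∧ d = trace ω₁ - trace ω₂}

theorem single_add_single_mem_traceDiffSpan {vin vout v w : V} (hG : G.Reachable v vout)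
    (hconn : (G.induce {x | x ≠ vout}).Preconnected) (hin : vin ≠ vout)
    (hadj : G.Adj v w) (hv : v ≠ vout) (hw : w ≠ vout) :
    Pi.single v 1 + Pi.single w 1 ∈ traceDiffSpan G vin vout := by
  obtain ⟨p, hp⟩ := hconn.exists_walk_support_subset (s := {x | x ≠ vout}) hin hv
  have hpout : vout ∉ p.support := fun h => hp _ h rfl
  obtain ⟨q₀⟩ := hG
  set q := q₀.takeUntil vout q₀.end_mem_support
  have hq : IsProper q := q₀.count_support_takeUntil_eq_one _
  have hdetour : trace (p.append ((q.cons hadj.symm).cons hadj)) - trace (p.append q)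
      = Pi.single v 1 + Pi.single w 1 := by
    simp only [trace_append, trace_cons]
    abel
  rw [← hdetour]
  exact Submodule.subset_span
    ⟨_, _, ((hq.cons hw).cons hv).append hpout, hq.append hpout, rfl⟩

end Traces

theorem indicator_diff_mem_span_general {V : Type*} [DecidableEq V]
    (G : SimpleGraph V) (hG : G.Connected) (vin vout : V) (hne : vin ≠ vout)
    (hconn : (G.induce {x | x ≠ vout}).Connected)
    (v : V) (ℓ : ℕ) (p : G.Walk vin v) (hp : vout ∉ p.support) (hlen : p.length = ℓ) :
    ((Pi.single vin 1 : V → ℝ) - ((-1 : ℝ)) ^ ℓ • (Pi.single v 1 : V → ℝ)) ∈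
      Submodule.span ℝ {d : V → ℝ | ∃ ω₁ ω₂ : G.Walk vin vout,
        IsProper ω₁ ∧ IsProper ω₂ ∧ d = trace ω₁ - trace ω₂} := by
  subst hlen
  change _ ∈ traceDiffSpan G vin vout
  refine p.single_sub_neg_one_pow_smul_single_mem fun d hd => ?_
  have avoids : ∀ x ∈ p.support, x ≠ vout := fun x hx h => hp (h ▸ hx)
  exact single_add_single_mem_traceDiffSpan (hG d.fst vout) hconn.preconnected hne d.adj
    (avoids _ (p.dart_fst_mem_support_of_mem_darts hd))
    (avoids _ (p.dart_snd_mem_support_of_mem_darts hd))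

/-- If there is a walk of length `ℓ` from `vin` to `v` inside `G - vout`, then
`χ_{vin} - (-1)^ℓ χ_v` lies in the span of the differences of traces of proper walks. -/
theorem indicator_diff_mem_span {V : Type*} [Fintype V] [DecidableEq V]
    (G : SimpleGraph V) (hG : G.Connected) (vin vout : V) (hne : vin ≠ vout)
    (hconn : (G.induce {x | x ≠ vout}).Connected)
    (v : V) (ℓ : ℕ) (p : G.Walk vin v) (hp : vout ∉ p.support) (hlen : p.length = ℓ) :
    ((Pi.single vin 1 : V → ℝ) - ((-1 : ℝ)) ^ ℓ • (Pi.single v 1 : V → ℝ)) ∈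
      Submodule.span ℝ {d : V → ℝ | ∃ ω₁ ω₂ : G.Walk vin vout,
        IsProper ω₁ ∧ IsProper ω₂ ∧ d = trace ω₁ - trace ω₂} :=
  indicator_diff_mem_span_general G hG vin vout hne hconn v ℓ p hp hlen

end
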